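/- Partition reduction, backward direction: with the instance of the partition reduction (poles of weight M at (1,2) and (r+3,r+4), middle demands p_i=(i+1, i+r+3) of weight x_i for 2≤i≤r+1, total middle weight M), every routing R satisfies ω(H_R, w) ≥ 3M/2, with equality attainable only if the middle demands can be split into two groups of weight M/2 each; hence if some routing achieves ω(H_R,w) = 3M/2 then there exists T ⊆ S with Σ_{x∈T} x = M/2. -/

import Mathlib

open Finset

/-- A demand `(i,j)` with `1 ≤ i < j ≤ n` on the cycle with nodes `1,…,n`. -/
structure Demand (n : ℕ) where
  i : ℕ
  j : ℕ
  h1i : 1 ≤ i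
  hij : i < j
  hjn : j ≤ n

namespace Demand

variable {n : ℕ}

instance : DecidableEq (Demand n) := fun p q =>
  if h : p.i = q.i ∧ p.j = q.j then
    .isTrue (by cases p; cases q; simp_all)
  else
    .isFalse (by rintro rfl; simp_all)

/-- Arcs are labeled `1,…,n`; arc `k` joins node `k` to node `k+1` (arc `n` joins `n` to `1`).
The arcs of the route `p⁺ = [i,j]` (avoiding arc `n`). -/
def arcPlus (p : Demand n) : Set ℕ := {k | p.i ≤ k ∧ k < p.j}

/-- The arcs of the route `p⁻ = [j,i]` (through arc `n`). -/
def arcMinus (p : Demand n) : Set ℕ := {k | (1 ≤ k ∧ k < p.i) ∨ (p.j ≤ k ∧ k ≤ n)}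

/-- The vertex set of the route `p⁺ = [i,j]`. -/
def VPlus (p : Demand n) : Set ℕ := {v | p.i ≤ v ∧ v ≤ p.j}

/-- The vertex set of the route `p⁻ = [j,i]`. -/
def VMinus (p : Demand n) : Set ℕ := {v | (1 ≤ v ∧ v ≤ p.i) ∨ (p.j ≤ v ∧ v ≤ n)}

/-- The set of ends of a demand. -/
def ends (p : Demand n) : Set ℕ := {p.i, p.j}

/-- Demands `p` and `q` cross if `p` has exactly one end in each of the two routes of `q`. -/
def Cross (p q : Demand n) : Prop :=
  (p.ends ∩ q.VPlus).ncard = 1 ∧ (p.ends ∩ q.VMinus).ncard = 1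

/-- The arcs of the route chosen by `b` (`true` = `p⁺`, `false` = `p⁻`).
A routing of a set of demands is a function `r : Demand n → Bool`. -/
def arcs (p : Demand n) (b : Bool) : Set ℕ := if b then p.arcPlus else p.arcMinus

end Demand

open Demand

/-- Two parallel demands collide in the routing `r`: their chosen routes share an arc and
together cover all the arcs of the cycle. -/
def Collide {n : ℕ} (r : Demand n → Bool) (p q : Demand n) : Prop :=
  ¬ Cross p q ∧ (p.arcs (r p) ∩ q.arcs (r q)).Nonempty ∧
    p.arcs (r p) ∪ q.arcs (r q) = Set.Icc 1 n

open scoped Classical in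
/-- The maximum weight `ω(H_r, w)` of a clique of the intersection graph `H_r` of the
routing `r` of the demand set `D` (vertices: chosen routes; adjacency: sharing an arc). -/
noncomputable def cliqueNum {n : ℕ} (D : Finset (Demand n)) (r : Demand n → Bool)
    (w : Demand n → ℕ) : ℕ :=
  (D.powerset.filter fun C =>
      ∀ p ∈ C, ∀ q ∈ C, p ≠ q → ((p : Demand n).arcs (r p) ∩ q.arcs (r q)).Nonempty).sup
    fun C => ∑ p ∈ C, w p

/-- The first pole demand `p₁ = (1,2)` on the cycle of `2r+4` nodes. -/
def pole1 (r : ℕ) : Demand (2 * r + 4) := ⟨1, 2, by omega, by omega, by omega⟩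

/-- The second pole demand `p_{r+2} = (r+3, r+4)`. -/
def pole2 (r : ℕ) : Demand (2 * r + 4) := ⟨r + 3, r + 4, by omega, by omega, by omega⟩

/-- The middle demand `p_t = (t+1, t+r+3)` for `2 ≤ t ≤ r+1`. -/
def mid (r t : ℕ) (h2 : 2 ≤ t) (ht : t ≤ r + 1) : Demand (2 * r + 4) :=
  ⟨t + 1, t + r + 3, by omega, by omega, by omega⟩

/-- The demand set of the partition reduction. -/
def partD (r : ℕ) : Finset (Demand (2 * r + 4)) :=
  {pole1 r, pole2 r} ∪
    (Finset.Icc 2 (r + 1)).attach.image fun t =>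
      mid r t.1 (Finset.mem_Icc.mp t.2).1 (Finset.mem_Icc.mp t.2).2

/-- The weights of the partition reduction: the poles get weight `M`, and the middle
demand `p_t = (t+1, t+r+3)` gets weight `x t`. -/
def partW (r : ℕ) (x : ℕ → ℕ) (M : ℕ) : Demand (2 * r + 4) → ℕ := fun p =>
  if p.i = 1 ∨ p.i = r + 3 then M else x (p.i - 1)

/-
Every route of the instance uses exactly one of the two pole arcs `1` and `r + 3`, so the cliques
of all routes through arc `1` and through arc `r + 3` partition the demands, of total weight `3M`;
the heavier one weighs at least `3M/2`. If `ω = 3M/2`, both weigh exactly `3M/2`. The poles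
contribute `0`, `M` or `2M` to the clique of arc `1` and the middle demands at most `M`, which
forces the middle demands routed through arc `1` to weigh exactly `M/2`.
-/

open scoped Classical in
theorem sum_le_cliqueNum {n : ℕ} {D C : Finset (Demand n)} {rt : Demand n → Bool}
    (w : Demand n → ℕ) (hCD : C ⊆ D)
    (hC : ∀ p ∈ C, ∀ q ∈ C, p ≠ q → (p.arcs (rt p) ∩ q.arcs (rt q)).Nonempty) :
    ∑ p ∈ C, w p ≤ cliqueNum D rt w := by
  unfold cliqueNum
  exact le_sup (f := fun C => ∑ p ∈ C, w p)
    (by simpa only [mem_filter, mem_powerset] using ⟨hCD, hC⟩)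

open scoped Classical in
noncomputable def arcClique {n : ℕ} (D : Finset (Demand n)) (rt : Demand n → Bool) (k : ℕ) :
    Finset (Demand n) :=
  {p ∈ D | k ∈ p.arcs (rt p)}

open scoped Classical in
theorem sum_arcClique_le_cliqueNum {n : ℕ} (D : Finset (Demand n)) (rt : Demand n → Bool)
    (w : Demand n → ℕ) (k : ℕ) : ∑ p ∈ arcClique D rt k, w p ≤ cliqueNum D rt w :=
  sum_le_cliqueNum w (filter_subset _ _) fun _ hp _ hq _ =>
    ⟨k, (mem_filter.mp hp).2, (mem_filter.mp hq).2⟩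

/-- `mid` extended to all `t`, with junk value `pole1 r` outside `2 ≤ t ≤ r + 1`. -/
def midD (r t : ℕ) : Demand (2 * r + 4) :=
  if h : 2 ≤ t ∧ t ≤ r + 1 then mid r t h.1 h.2 else pole1 r

theorem midD_eq_mid {r t : ℕ} (h2 : 2 ≤ t) (ht : t ≤ r + 1) : midD r t = mid r t h2 ht := by
  simp [midD, h2, ht]

theorem partD_eq (r : ℕ) : partD r = {pole1 r, pole2 r} ∪ (Icc 2 (r + 1)).image (midD r) := by
  ext p
  simp only [partD, mem_union, mem_image, mem_attach, true_and, Subtype.exists, mem_Icc]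
  constructor
  · rintro (hp | ⟨t, ht, rfl⟩)
    exacts [.inl hp, .inr ⟨t, ht, midD_eq_mid ht.1 ht.2⟩]
  · rintro (hp | ⟨t, ht, rfl⟩)
    exacts [.inl hp, .inr ⟨t, ht, (midD_eq_mid ht.1 ht.2).symm⟩]

theorem sum_partD (r : ℕ) (f : Demand (2 * r + 4) → ℕ) :
    ∑ p ∈ partD r, f p = f (pole1 r) + f (pole2 r) + ∑ t ∈ Icc 2 (r + 1), f (midD r t) := by
  have hpoles : pole1 r ≠ pole2 r := fun h => by simpa [pole1, pole2] using congrArg Demand.i h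
  have hmid_i {t : ℕ} (ht : t ∈ Icc 2 (r + 1)) : (midD r t).i = t + 1 := by
    rw [mem_Icc] at ht
    rw [midD_eq_mid ht.1 ht.2, mid]
  have hdisj : Disjoint {pole1 r, pole2 r} ((Icc 2 (r + 1)).image (midD r)) := by
    simp only [disjoint_insert_left, disjoint_singleton_left, mem_image, not_exists, not_and]
    refine ⟨fun t ht h => ?_, fun t ht h => ?_⟩ <;>
      have := (hmid_i ht).symm.trans (congrArg Demand.i h) <;>
      simp [pole1, pole2, mem_Icc] at this ht <;> omega
  have hinj : Set.InjOn (midD r) (Icc 2 (r + 1)) := fun s hs t ht h => by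
    simpa [hmid_i hs, hmid_i ht] using congrArg Demand.i h
  rw [partD_eq, sum_union hdisj, sum_pair hpoles, sum_image hinj]

theorem partW_pole1 (r : ℕ) (x : ℕ → ℕ) (M : ℕ) : partW r x M (pole1 r) = M := by
  simp [partW, pole1]

theorem partW_pole2 (r : ℕ) (x : ℕ → ℕ) (M : ℕ) : partW r x M (pole2 r) = M := by
  simp [partW, pole2]

theorem partW_midD {r t : ℕ} (x : ℕ → ℕ) (M : ℕ) (ht : t ∈ Icc 2 (r + 1)) :
    partW r x M (midD r t) = x t := by
  rw [mem_Icc] at ht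
  rw [midD_eq_mid ht.1 ht.2, partW, if_neg (by simp only [mid]; omega)]
  simp [mid]

theorem sum_partW (r : ℕ) (x : ℕ → ℕ) (M : ℕ) :
    ∑ p ∈ partD r, partW r x M p = 2 * M + ∑ t ∈ Icc 2 (r + 1), x t := by
  rw [sum_partD, partW_pole1, partW_pole2, sum_congr rfl fun t ht => partW_midD x M ht]
  ring

theorem add_three_mem_arcs_iff_one_notMem_arcs {r : ℕ} {p : Demand (2 * r + 4)}
    (hp : p ∈ partD r) (b : Bool) : r + 3 ∈ p.arcs b ↔ 1 ∉ p.arcs b := by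
  rw [partD_eq] at hp
  simp only [mem_union, mem_insert, mem_singleton, mem_image, mem_Icc] at hp
  rcases hp with (rfl | rfl) | ⟨t, ht, rfl⟩
  all_goals
    try rw [midD_eq_mid ht.1 ht.2]
    cases b <;> simp [arcs, arcPlus, arcMinus, pole1, pole2, mid] <;> omega

section routing

open scoped Classical

variable {r : ℕ} (x : ℕ → ℕ) (M : ℕ) (rt : Demand (2 * r + 4) → Bool)

theorem sum_arcClique_one_add_sum_arcClique_add_three :
    ∑ p ∈ arcClique (partD r) rt 1, partW r x M p +
        ∑ p ∈ arcClique (partD r) rt (r + 3), partW r x M p =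
      2 * M + ∑ t ∈ Icc 2 (r + 1), x t := by
  rw [arcClique, arcClique,
    filter_congr fun p hp => add_three_mem_arcs_iff_one_notMem_arcs hp (rt p),
    sum_filter_add_sum_filter_not, sum_partW]

theorem sum_arcClique_one :
    ∑ p ∈ arcClique (partD r) rt 1, partW r x M p =
      (if 1 ∈ (pole1 r).arcs (rt (pole1 r)) then M else 0) +
        (if 1 ∈ (pole2 r).arcs (rt (pole2 r)) then M else 0) +
          ∑ t ∈ Icc 2 (r + 1) with 1 ∈ (midD r t).arcs (rt (midD r t)), x t := by
  rw [arcClique, sum_filter, sum_partD, partW_pole1, partW_pole2, sum_filter]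
  congr 1
  exact sum_congr rfl fun t ht => by rw [partW_midD x M ht]

end routing

theorem partition_reduction_backward_general (r : ℕ) (x : ℕ → ℕ)
    (M : ℕ) (hM : M = ∑ t ∈ Finset.Icc 2 (r + 1), x t) :
    (∀ rt : Demand (2 * r + 4) → Bool,
        3 * M / 2 ≤ cliqueNum (partD r) rt (partW r x M)) ∧
    (∀ rt : Demand (2 * r + 4) → Bool,
        cliqueNum (partD r) rt (partW r x M) = 3 * M / 2 →
        ∃ T ⊆ Finset.Icc 2 (r + 1), ∑ t ∈ T, x t = M / 2) := by
  classical
  refine ⟨fun rt => ?_, fun rt hω => ?_⟩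
  · have hsum := sum_arcClique_one_add_sum_arcClique_add_three x M rt
    have h1 := sum_arcClique_le_cliqueNum (partD r) rt (partW r x M) 1
    have h3 := sum_arcClique_le_cliqueNum (partD r) rt (partW r x M) (r + 3)
    omega
  · have hsum := sum_arcClique_one_add_sum_arcClique_add_three x M rt
    have h1 := sum_arcClique_le_cliqueNum (partD r) rt (partW r x M) 1
    have h3 := sum_arcClique_le_cliqueNum (partD r) rt (partW r x M) (r + 3)
    refine ⟨{t ∈ Icc 2 (r + 1) | 1 ∈ (midD r t).arcs (rt (midD r t))}, filter_subset _ _, ?_⟩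
    have hmid : ∑ t ∈ Icc 2 (r + 1) with 1 ∈ (midD r t).arcs (rt (midD r t)), x t ≤ M :=
      hM ▸ sum_le_sum_of_subset (filter_subset _ _)
    rw [sum_arcClique_one] at hsum h1
    split_ifs at hsum h1 <;> omega

/-- Partition reduction, backward direction: every routing of the
partition-reduction instance has maximum weighted clique at least `3M/2`, and if some
routing achieves exactly `3M/2`, then there is a subset `T` of the given integers summing
to `M/2`. -/
theorem partition_reduction_backward (r : ℕ) (x : ℕ → ℕ)
    (hx : ∀ t, 2 ≤ t → t ≤ r + 1 → 0 < x t)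
    (M : ℕ) (hM : M = ∑ t ∈ Finset.Icc 2 (r + 1), x t) (hMe : Even M) :
    (∀ rt : Demand (2 * r + 4) → Bool,
        3 * M / 2 ≤ cliqueNum (partD r) rt (partW r x M)) ∧
    (∀ rt : Demand (2 * r + 4) → Bool,
        cliqueNum (partD r) rt (partW r x M) = 3 * M / 2 →
        ∃ T ⊆ Finset.Icc 2 (r + 1), ∑ t ∈ T, x t = M / 2) :=
  partition_reduction_backward_general r x M hM
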